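/- Let K be a field with a surjective discrete valuation ν and valuation ring O. Let g be a nonzero Laurent polynomial in n variables over K with all coefficients in O, let ω ∈ ℤⁿ, and suppose init_ω(g) = c X^α is a single term with ν(c) = 0. Then for every x ∈ (Kˣ)ⁿ with ν(x) = ω one has ν(g(x)) = ⟨α,ω⟩; in particular, ν(g(x)) ≥ 0 if and only if ⟨α,ω⟩ ≥ 0. -/

import Mathlib

noncomputable section

/-- Standard inner product of an integer vector with a real vector. -/
def ipR {n : ℕ} (α : Fin n → ℤ) (ω : Fin n → ℝ) : ℝ := ∑ i, (α i : ℝ) * ω i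

/-- Standard inner product of two integer vectors. -/
def ipZ {n : ℕ} (α ω : Fin n → ℤ) : ℤ := ∑ i, α i * ω i

open scoped Classical in
/-- Initial form `init_ω(f)` of a Laurent polynomial `f` in the direction `ω`. -/
def initForm {K : Type*} [Field K] {n : ℕ} (ω : Fin n → ℝ)
    (f : (Fin n → ℤ) →₀ K) : (Fin n → ℤ) →₀ K :=
  Finsupp.filter (fun α => ∀ β ∈ f.support, ipR α ω ≤ ipR β ω) f

/-- Evaluation of a Laurent polynomial at a point of the torus `(Kˣ)ⁿ`. -/
def evalL {K : Type*} [Field K] {n : ℕ} (f : (Fin n → ℤ) →₀ K) (x : Fin n → Kˣ) : K :=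
  ∑ α ∈ f.support, f α * ∏ i, ((x i ^ (α i) : Kˣ) : K)

/-!
Write `g(x) = ∑_β g_β x^β`. Since `ν(x) = ω`, the term of index `β` has valuation
`ν(g_β) + ⟨β, ω⟩ ≥ ⟨β, ω⟩`. The hypothesis on the initial form says that `α` is the unique
exponent minimising `⟨·, ω⟩` on the support of `g` and that `ν(g_α) = 0`, so the term of
index `α` has valuation `⟨α, ω⟩`, strictly below that of every other term; by the
ultrametric inequality it determines `ν(g(x))`.
-/

namespace AddValuation

section CommRing

variable {R Γ₀ : Type*} [CommRing R] [LinearOrderedAddCommMonoidWithTop Γ₀]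
  (v : AddValuation R Γ₀)

theorem map_prod {ι : Type*} (s : Finset ι) (f : ι → R) :
    v (∏ i ∈ s, f i) = ∑ i ∈ s, v (f i) :=
  _root_.map_prod (toValuation v) f s

theorem map_sum_eq_of_lt {ι : Type*} [DecidableEq ι] {s : Finset ι} {f : ι → R} {j : ι}
    (hj : j ∈ s) (hf : ∀ i ∈ s \ {j}, v (f j) < v (f i)) :
    v (∑ i ∈ s, f i) = v (f j) :=
  Valuation.map_sum_eq_of_lt v hj hf

end CommRing

theorem map_zpow {K Γ₀ : Type*} [Field K] [LinearOrderedAddCommGroupWithTop Γ₀]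
    (v : AddValuation K Γ₀) (x : K) (m : ℤ) : v (x ^ m) = m • v x := by
  cases m with
  | ofNat k => simp
  | negSucc k => simp [zpow_negSucc, negSucc_zsmul]

end AddValuation

theorem WithTop.coe_zsmul {G : Type*} [AddCommGroup G] [LinearOrder G] [IsOrderedAddMonoid G]
    (m : ℤ) (a : G) : ((m • a : G) : WithTop G) = m • (a : WithTop G) := by
  cases m with
  | ofNat k => simp
  | negSucc k => simp [negSucc_zsmul, WithTop.LinearOrderedAddCommGroup.coe_neg]

theorem ipR_intCast {n : ℕ} (β ω : Fin n → ℤ) : ipR β (fun i => (ω i : ℝ)) = ipZ β ω := by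
  simp [ipR, ipZ]

section InitForm

variable {K : Type*} [Field K] {n : ℕ} {ω : Fin n → ℝ} {f : (Fin n → ℤ) →₀ K}
  {α β : Fin n → ℤ} {c : K}

theorem mem_support_initForm :
    β ∈ (initForm ω f).support ↔ β ∈ f.support ∧ ∀ γ ∈ f.support, ipR β ω ≤ ipR γ ω := by
  classical
  simp [initForm, Finsupp.support_filter]

theorem initForm_apply_of_mem_support (hβ : β ∈ (initForm ω f).support) :
    initForm ω f β = f β := by
  classical
  exact Finsupp.filter_apply_pos _ _ (mem_support_initForm.mp hβ).2

theorem apply_eq_of_initForm_eq_single (h : initForm ω f = Finsupp.single α c) (hc : c ≠ 0) :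
    f α = c := by
  have hα : α ∈ (initForm ω f).support := by simp [h, hc]
  rw [← initForm_apply_of_mem_support hα, h, Finsupp.single_eq_same]

theorem ipR_lt_of_initForm_eq_single (h : initForm ω f = Finsupp.single α c) (hc : c ≠ 0)
    (hβ : β ∈ f.support) (hne : β ≠ α) : ipR α ω < ipR β ω := by
  have hα_min := (mem_support_initForm.mp (show α ∈ (initForm ω f).support by simp [h, hc])).2
  have hβ_not_min : ¬ ∀ γ ∈ f.support, ipR β ω ≤ ipR γ ω := fun hmin =>
    hne (by simpa [h, hc] using mem_support_initForm.mpr ⟨hβ, hmin⟩)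
  push Not at hβ_not_min
  obtain ⟨γ, hγ, hγβ⟩ := hβ_not_min
  exact (hα_min γ hγ).trans_lt hγβ

end InitForm

theorem valuation_monomial {K : Type*} [Field K] {n : ℕ} (v : AddValuation K (WithTop ℤ))
    {ω : Fin n → ℤ} {x : Fin n → Kˣ} (hx : ∀ i, v ((x i : K)) = (ω i : WithTop ℤ))
    (β : Fin n → ℤ) : v (∏ i, ((x i ^ (β i) : Kˣ) : K)) = (ipZ β ω : WithTop ℤ) := by
  simp [AddValuation.map_prod, AddValuation.map_zpow, hx, ipZ, WithTop.coe_sum,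
    ← WithTop.coe_zsmul]

theorem valuation_eval_of_initForm_term_general {K : Type*} [Field K] {n : ℕ}
    (v : AddValuation K (WithTop ℤ))
    (g : (Fin n → ℤ) →₀ K)
    (hcoeff : ∀ β, 0 ≤ v (g β))
    (ω : Fin n → ℤ)
    (α : Fin n → ℤ) (c : K) (hc : v c = (0 : WithTop ℤ))
    (hinit : initForm (fun i => (ω i : ℝ)) g = Finsupp.single α c)
    (x : Fin n → Kˣ) (hx : ∀ i, v ((x i : K)) = (ω i : WithTop ℤ)) :
    v (evalL g x) = (ipZ α ω : WithTop ℤ) ∧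
      (0 ≤ v (evalL g x) ↔ 0 ≤ ipZ α ω) := by
  classical
  have hc0 : c ≠ 0 := by
    rintro rfl
    simp at hc
  have hgα : g α = c := apply_eq_of_initForm_eq_single hinit hc0
  have hα : α ∈ g.support := by simpa [hgα] using hc0
  have hterm : ∀ β, v (g β * ∏ i, ((x i ^ (β i) : Kˣ) : K)) = v (g β) + ipZ β ω := fun β => by
    rw [AddValuation.map_mul, valuation_monomial v hx]
  have hval : v (evalL g x) = ipZ α ω := by
    rw [evalL, AddValuation.map_sum_eq_of_lt v hα, hterm, hgα, hc, zero_add]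
    intro β hβ
    obtain ⟨hβ, hne⟩ : β ∈ g.support ∧ β ≠ α := by simpa using hβ
    have hlt := ipR_lt_of_initForm_eq_single hinit hc0 hβ hne
    rw [ipR_intCast, ipR_intCast, Int.cast_lt] at hlt
    rw [hterm, hterm, hgα, hc, zero_add]
    calc (ipZ α ω : WithTop ℤ) < ipZ β ω := WithTop.coe_lt_coe.mpr hlt
      _ ≤ v (g β) + ipZ β ω := le_add_of_nonneg_left (hcoeff β)
  exact ⟨hval, by rw [hval]; exact WithTop.coe_nonneg⟩

/-- If `g` is a nonzero Laurent polynomial with coefficients in the valuation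
ring whose initial form in the direction `ω ∈ ℤⁿ` is a single term `c X^α` with
`ν(c) = 0`, then `ν(g(x)) = ⟨α, ω⟩` for all `x ∈ (Kˣ)ⁿ` with `ν(x) = ω`; in
particular `ν(g(x)) ≥ 0` iff `⟨α, ω⟩ ≥ 0`. -/
theorem valuation_eval_of_initForm_term {K : Type*} [Field K] {n : ℕ}
    (v : AddValuation K (WithTop ℤ))
    (hsurj : ∀ m : ℤ, ∃ y : K, v y = (m : WithTop ℤ))
    (hker : ∀ y : K, v y = ⊤ → y = 0)
    (g : (Fin n → ℤ) →₀ K) (hg : g ≠ 0)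
    (hcoeff : ∀ β, 0 ≤ v (g β))
    (ω : Fin n → ℤ)
    (α : Fin n → ℤ) (c : K) (hc : v c = (0 : WithTop ℤ))
    (hinit : initForm (fun i => (ω i : ℝ)) g = Finsupp.single α c)
    (x : Fin n → Kˣ) (hx : ∀ i, v ((x i : K)) = (ω i : WithTop ℤ)) :
    v (evalL g x) = (ipZ α ω : WithTop ℤ) ∧
      (0 ≤ v (evalL g x) ↔ 0 ≤ ipZ α ω) :=
  valuation_eval_of_initForm_term_general v g hcoeff ω α c hc hinit x hx
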